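/- arXiv:0710.3655 — 3 statements merged into one kernel-verified Lean document; each statement's English description precedes it below -/
import Mathlib

section
/- A measurable set G ⊆ ℝ is a 2-dilation generator of a partition of ℝ (the sets 2^n G, n ∈ ℤ, are disjoint and ℝ \ ⋃_n 2^n G is null) if and only if G is, modulo a null set, dilation congruent modulo 2 to [−2π, −π) ∪ [π, 2π). -/
open MeasureTheory

/-- `P` is a measurable partition (modulo null sets) of `E`, indexed by `ℤ`. -/
def IsMeasPartitionZ (P : ℤ → Set ℝ) (E : Set ℝ) : Prop :=
  (∀ n, MeasurableSet (P n)) ∧ (∀ m n : ℤ, m ≠ n → volume (P m ∩ P n) = 0) ∧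
    volume (symmDiff (⋃ n, P n) E) = 0

/-- `G` and `H` are dilation congruent modulo 2: there is a measurable partition {Gₙ} of G
such that {2ⁿ Gₙ} is a measurable partition of H (modulo null sets). -/
def DilCongr2 (G H : Set ℝ) : Prop :=
  ∃ P : ℤ → Set ℝ, IsMeasPartitionZ P G ∧
    IsMeasPartitionZ (fun n => (fun x => (2 : ℝ) ^ n * x) '' P n) H

/-!
Two measurable dilation generators `G` and `S` are always congruent: the pieces
`Gₙ = G ∩ 2⁻ⁿS` satisfy `2ⁿGₙ = 2ⁿG ∩ S`, so both partitions come from the same construction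
with the roles of `G` and `S` swapped. Conversely, if the `2ⁿGₙ` tile `S`, then
`2ᵐGₖ = 2ᵐ⁻ᵏ(2ᵏGₖ)` lies a.e. in `2ᵐ⁻ᵏS`, so two such pieces overlap in a null set, either
because distinct dilates of `S` do or because the `2ᵏGₖ` do; and `G` has the same dilation
orbit as `⋃ₖ 2ᵏGₖ`, which is a.e. that of `S`. The Shannon set agrees a.e. with
`{π ≤ |x| < 2π}`, whose dilates `{2ⁿπ ≤ |x| < 2ⁿ⁺¹π}` tile `ℝ \ {0}`.
-/

open Set Filter Real

def dilate (n : ℤ) (A : Set ℝ) : Set ℝ := (fun x => (2 : ℝ) ^ n * x) '' A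

def dilateOrbit (A : Set ℝ) : Set ℝ := ⋃ n : ℤ, dilate n A

def IsDilationGenerator (G : Set ℝ) : Prop :=
  Pairwise (fun m n => AEDisjoint volume (dilate m G) (dilate n G)) ∧
    dilateOrbit G =ᵐ[volume] univ

section Dilate

variable {n : ℤ} {A B : Set ℝ} {x : ℝ}

lemma dilate_eq_preimage (n : ℤ) (A : Set ℝ) :
    dilate n A = (fun x => (2 : ℝ) ^ (-n) * x) ⁻¹' A := by
  have h2n : (2 : ℝ) ^ n ≠ 0 := zpow_ne_zero n two_ne_zero
  refine congrFun (image_eq_preimage_of_inverse (fun x => ?_) (fun x => ?_)) A <;> rw [zpow_neg]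
  exacts [inv_mul_cancel_left₀ h2n x, mul_inv_cancel_left₀ h2n x]

lemma mem_dilate : x ∈ dilate n A ↔ (2 : ℝ) ^ (-n) * x ∈ A := by
  rw [dilate_eq_preimage, mem_preimage]

lemma dilate_dilate (m n : ℤ) (A : Set ℝ) : dilate m (dilate n A) = dilate (m + n) A := by
  simp only [dilate, image_image, ← mul_assoc, ← zpow_add₀ (two_ne_zero (α := ℝ))]

lemma dilate_zero (A : Set ℝ) : dilate 0 A = A := by
  simp [dilate]

lemma dilate_inter (n : ℤ) (A B : Set ℝ) : dilate n (A ∩ B) = dilate n A ∩ dilate n B := by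
  simp only [dilate_eq_preimage, preimage_inter]

lemma dilate_iUnion {ι : Sort*} (n : ℤ) (A : ι → Set ℝ) :
    dilate n (⋃ i, A i) = ⋃ i, dilate n (A i) :=
  image_iUnion

lemma MeasurableSet.dilate (hA : MeasurableSet A) (n : ℤ) : MeasurableSet (dilate n A) := by
  rw [dilate_eq_preimage]
  exact hA.preimage (measurable_const_mul _)

lemma quasiMeasurePreserving_zpow_two_mul (n : ℤ) :
    Measure.QuasiMeasurePreserving (fun x : ℝ => (2 : ℝ) ^ n * x) volume volume :=
  Measure.quasiMeasurePreserving_smul volume (zpow_ne_zero n two_ne_zero)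

lemma dilate_ae_le (h : A ≤ᵐ[volume] B) (n : ℤ) : dilate n A ≤ᵐ[volume] dilate n B := by
  simpa only [dilate_eq_preimage] using
    (quasiMeasurePreserving_zpow_two_mul (-n)).preimage_mono_ae h

lemma dilate_ae_eq (h : A =ᵐ[volume] B) (n : ℤ) : dilate n A =ᵐ[volume] dilate n B := by
  simpa only [dilate_eq_preimage] using
    (quasiMeasurePreserving_zpow_two_mul (-n)).preimage_ae_eq h

lemma AEDisjoint.dilate (h : AEDisjoint volume A B) (n : ℤ) :
    AEDisjoint volume (dilate n A) (dilate n B) := by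
  simpa only [dilate_eq_preimage] using h.preimage (quasiMeasurePreserving_zpow_two_mul (-n))

lemma dilateOrbit_dilate (k : ℤ) (A : Set ℝ) : dilateOrbit (dilate k A) = dilateOrbit A := by
  simp only [dilateOrbit, dilate_dilate]
  exact (add_right_surjective k).iUnion_comp fun n => dilate n A

lemma dilateOrbit_iUnion {ι : Sort*} (A : ι → Set ℝ) :
    dilateOrbit (⋃ i, A i) = ⋃ i, dilateOrbit (A i) := by
  simp only [dilateOrbit, dilate_iUnion]
  exact iUnion_comm _

lemma dilateOrbit_ae_eq (h : A =ᵐ[volume] B) : dilateOrbit A =ᵐ[volume] dilateOrbit B :=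
  Filter.EventuallyEq.countable_iUnion fun n => dilate_ae_eq h n

end Dilate

lemma isMeasPartitionZ_iff {P : ℤ → Set ℝ} {E : Set ℝ} :
    IsMeasPartitionZ P E ↔ (∀ n, MeasurableSet (P n)) ∧
      Pairwise (fun m n => AEDisjoint volume (P m) (P n)) ∧ ⋃ n, P n =ᵐ[volume] E := by
  rw [IsMeasPartitionZ, measure_symmDiff_eq_zero_iff]
  rfl

lemma IsMeasPartitionZ.comp_equiv {P : ℤ → Set ℝ} {E : Set ℝ} (h : IsMeasPartitionZ P E)
    (e : ℤ ≃ ℤ) : IsMeasPartitionZ (P ∘ e) E := by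
  obtain ⟨hmeas, hdisj, hunion⟩ := isMeasPartitionZ_iff.1 h
  refine isMeasPartitionZ_iff.2
    ⟨fun n => hmeas (e n), fun m n hmn => hdisj (e.injective.ne hmn), ?_⟩
  rwa [Function.comp_def, e.surjective.iUnion_comp P]

lemma isDilationGenerator_iff {G : Set ℝ} :
    IsDilationGenerator G ↔ (∀ m n : ℤ, m ≠ n → volume (dilate m G ∩ dilate n G) = 0) ∧
      volume (univ \ ⋃ n : ℤ, dilate n G) = 0 := by
  rw [IsDilationGenerator, ae_eq_univ, compl_eq_univ_sdiff]
  rfl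

namespace IsDilationGenerator

variable {S : Set ℝ} (hS : IsDilationGenerator S)
include hS

lemma aedisjoint_dilate_of_ae_le {A B : Set ℝ} (hA : A ≤ᵐ[volume] S) (hB : B ≤ᵐ[volume] S)
    {m n : ℤ} (hmn : m ≠ n) : AEDisjoint volume (dilate m A) (dilate n B) :=
  (hS.1 hmn).mono_ae (dilate_ae_le hA m) (dilate_ae_le hB n)

lemma congr_ae {T : Set ℝ} (h : S =ᵐ[volume] T) : IsDilationGenerator T :=
  ⟨fun _ _ hmn => (hS.1 hmn).congr (dilate_ae_eq h.symm _) (dilate_ae_eq h.symm _),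
    (dilateOrbit_ae_eq h.symm).trans hS.2⟩

lemma isMeasPartitionZ_inter_dilate {G : Set ℝ} (hG : MeasurableSet G)
    (hSm : MeasurableSet S) : IsMeasPartitionZ (fun n => G ∩ dilate n S) G := by
  refine isMeasPartitionZ_iff.2 ⟨fun n => hG.inter (hSm.dilate n),
    fun m n hmn => (hS.1 hmn).mono inter_subset_right inter_subset_right, ?_⟩
  rw [← inter_iUnion]
  change (G ∩ dilateOrbit S : Set ℝ) =ᵐ[volume] G
  simpa only [inter_univ] using EventuallyEq.rfl.inter hS.2

end IsDilationGenerator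

lemma dilate_inter_dilate_neg (n : ℤ) (G S : Set ℝ) :
    dilate n (G ∩ dilate (-n) S) = S ∩ dilate n G := by
  rw [dilate_inter, dilate_dilate, add_neg_cancel, dilate_zero, inter_comm]

lemma IsDilationGenerator.dilCongr2 {G S : Set ℝ} (hG : IsDilationGenerator G)
    (hS : IsDilationGenerator S) (hGm : MeasurableSet G) (hSm : MeasurableSet S) :
    DilCongr2 G S := by
  refine ⟨fun n => G ∩ dilate (-n) S,
    (hS.isMeasPartitionZ_inter_dilate hGm hSm).comp_equiv (Equiv.neg ℤ), ?_⟩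
  convert hG.isMeasPartitionZ_inter_dilate hSm hGm using 1
  funext n
  exact dilate_inter_dilate_neg n G S

lemma dilateOrbit_iUnion_dilate (P : ℤ → Set ℝ) :
    dilateOrbit (⋃ k, dilate k (P k)) = dilateOrbit (⋃ k, P k) := by
  simp only [dilateOrbit_iUnion, dilateOrbit_dilate]

lemma DilCongr2.isDilationGenerator {G S : Set ℝ} (h : DilCongr2 G S)
    (hS : IsDilationGenerator S) : IsDilationGenerator G := by
  obtain ⟨P, hP, hQ⟩ := h
  obtain ⟨-, hPdisj, hPG⟩ := isMeasPartitionZ_iff.1 hP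
  obtain ⟨-, hQdisj, hQS⟩ := isMeasPartitionZ_iff.1 hQ
  change Pairwise (fun m n => AEDisjoint volume (dilate m (P m)) (dilate n (P n))) at hQdisj
  change ⋃ k, dilate k (P k) =ᵐ[volume] S at hQS
  have hQle (k : ℤ) : dilate k (P k) ≤ᵐ[volume] S :=
    (subset_iUnion (fun k => dilate k (P k)) k).eventuallyLE.trans hQS.le
  refine ⟨fun m n hmn => ?_, ?_⟩
  · refine AEDisjoint.congr ?_ (dilate_ae_eq hPG.symm m) (dilate_ae_eq hPG.symm n)
    simp only [dilate_iUnion, AEDisjoint.iUnion_left_iff, AEDisjoint.iUnion_right_iff]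
    intro l k
    rw [← sub_add_cancel m k, ← sub_add_cancel n l, ← dilate_dilate, ← dilate_dilate]
    by_cases hkl : m - k = n - l
    · rw [hkl]
      exact AEDisjoint.dilate (hQdisj fun hkl' => hmn (by omega)) _
    · exact hS.aedisjoint_dilate_of_ae_le (hQle k) (hQle l) hkl
  · have hGS : dilateOrbit (⋃ k, P k) =ᵐ[volume] dilateOrbit S := by
      rw [← dilateOrbit_iUnion_dilate]
      exact dilateOrbit_ae_eq hQS
    exact ((dilateOrbit_ae_eq hPG.symm).trans hGS).trans hS.2

lemma isDilationGenerator_iff_dilCongr2 {G S : Set ℝ} (hGm : MeasurableSet G)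
    (hSm : MeasurableSet S) (hS : IsDilationGenerator S) :
    IsDilationGenerator G ↔ DilCongr2 G S :=
  ⟨fun hG => hG.dilCongr2 hS hGm hSm, fun h => h.isDilationGenerator hS⟩

lemma abs_preimage_Ico {a b : ℝ} (ha : 0 ≤ a) : abs ⁻¹' Ico a b = Ioc (-b) (-a) ∪ Ico a b := by
  ext x
  simp only [mem_preimage, mem_union, mem_Ico, mem_Ioc]
  rcases le_or_gt 0 x with hx | hx
  · rw [abs_of_nonneg hx]
    constructor
    · exact Or.inr
    · rintro (h | h) <;> constructor <;> linarith
  · rw [abs_of_neg hx]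
    constructor
    · rintro ⟨h₁, h₂⟩; left; constructor <;> linarith
    · rintro (h | h) <;> constructor <;> linarith

lemma mem_dilate_abs_preimage_Ico {n : ℤ} {c x : ℝ} :
    x ∈ dilate n (abs ⁻¹' Ico c (2 * c)) ↔ 2 ^ n * c ≤ |x| ∧ |x| < 2 ^ (n + 1) * c := by
  have h2n : (0 : ℝ) < 2 ^ n := zpow_pos two_pos n
  rw [mem_dilate, mem_preimage, abs_mul, abs_of_pos (zpow_pos two_pos _), mem_Ico, zpow_neg,
    le_inv_mul_iff₀ h2n, inv_mul_lt_iff₀ h2n, zpow_add_one₀ two_ne_zero, mul_assoc]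

lemma isDilationGenerator_abs_preimage_Ico {c : ℝ} (hc : 0 < c) :
    IsDilationGenerator (abs ⁻¹' Ico c (2 * c)) := by
  have hdisj {m n : ℤ} (hmn : m < n) :
      Disjoint (dilate m (abs ⁻¹' Ico c (2 * c))) (dilate n (abs ⁻¹' Ico c (2 * c))) := by
    refine disjoint_left.2 fun x hm hn => ?_
    rw [mem_dilate_abs_preimage_Ico] at hm hn
    have : (2 : ℝ) ^ (m + 1) ≤ 2 ^ n := zpow_le_zpow_right₀ one_le_two hmn
    nlinarith
  refine ⟨fun m n hmn => ?_,
    ae_eq_univ.2 (measure_mono_null (fun x hx => ?_) (measure_singleton 0))⟩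
  · rcases hmn.lt_or_gt with h | h
    exacts [(hdisj h).aedisjoint, (hdisj h).symm.aedisjoint]
  · rw [mem_singleton_iff]
    by_contra hx0
    obtain ⟨n, hn⟩ := exists_mem_Ico_zpow (div_pos (abs_pos.2 hx0) hc) one_lt_two
    rw [mem_Ico, le_div_iff₀ hc, div_lt_iff₀ hc] at hn
    exact hx (mem_iUnion.2 ⟨n, mem_dilate_abs_preimage_Ico.2 hn⟩)

lemma isDilationGenerator_shannon :
    IsDilationGenerator (Ico (-(2 * π)) (-π) ∪ Ico π (2 * π)) := by
  refine (isDilationGenerator_abs_preimage_Ico Real.pi_pos).congr_ae ?_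
  rw [abs_preimage_Ico Real.pi_pos.le]
  exact (Ico_ae_eq_Ioc (μ := (volume : Measure ℝ))).symm.union EventuallyEq.rfl

/-- A measurable set G ⊆ ℝ is a 2-dilation generator of a partition of ℝ iff it is, modulo
null sets, dilation congruent modulo 2 to [−2π, −π) ∪ [π, 2π). -/
theorem dilation_generator_iff_congruent_shannon (G : Set ℝ) (hG : MeasurableSet G) :
    ((∀ m n : ℤ, m ≠ n →
        volume (((fun x => (2 : ℝ) ^ m * x) '' G) ∩ ((fun x => (2 : ℝ) ^ n * x) '' G)) = 0) ∧
      volume (Set.univ \ ⋃ n : ℤ, (fun x => (2 : ℝ) ^ n * x) '' G) = 0)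
    ↔ DilCongr2 G (Set.Ico (-(2 * Real.pi)) (-Real.pi) ∪ Set.Ico Real.pi (2 * Real.pi)) :=
  isDilationGenerator_iff.symm.trans <| isDilationGenerator_iff_dilCongr2 hG
    (measurableSet_Ico.union measurableSet_Ico) isDilationGenerator_shannon
end

section
/- If E ⊆ ℝ is measurable and there exists k ∈ ℤ, k ≠ 0, with m(E ∩ (E + 2πk)) > 0, then the restricted exponentials {e^{iℓs}|_E : ℓ ∈ ℤ} do not span a dense subspace of L²(E); explicitly, the function h = χ_{E₁} − χ_{E₂}, with E₁ = E ∩ (E + 2πk) and E₂ = E₁ − 2πk, is a nonzero element of L²(E) orthogonal to every e^{iℓs}|_E. -/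
/-!
If `h` vanished a.e. on `E`, then `E₁` would agree a.e. with its translate by `2πk`. Every
translate of the fundamental domain `(0, |2πk|]` of `2πk ℤ` would then meet `E₁` in the same
measure, so the finite measure of `E₁` would be an infinite sum of equal terms, hence zero.
Orthogonality holds because `E₂` is the translate of `E₁` by `-2πk`, a period of `e^{-iℓs}`.
-/

open MeasureTheory Set
open scoped ENNReal Pointwise

theorem MeasureTheory.IsAddFundamentalDomain.measure_eq_zero_of_vadd_ae_eq_self
    {G α : Type*} [AddGroup G] [Countable G] [Infinite G] [AddAction G α] [MeasurableSpace α]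
    {s t : Set α} {μ : Measure α} [MeasurableConstVAdd G α] [VAddInvariantMeasure G α μ]
    (h : IsAddFundamentalDomain G s μ) (ht : ∀ g : G, g +ᵥ t =ᵐ[μ] t) (hfin : μ t ≠ ∞) :
    μ t = 0 := by
  have hsum : μ t = ∑' _ : G, μ (t ∩ s) := by
    rw [h.measure_eq_tsum]
    exact tsum_congr fun g => measure_congr ((ht g).inter (ae_eq_refl s))
  by_contra hne
  rw [hsum, ENNReal.tsum_const_eq_top_of_ne_zero fun h0 => hne (by simp [hsum, h0])] at hfin
  exact hfin rfl

theorem Real.measure_eq_zero_of_preimage_add_ae_eq_self {μ : Measure ℝ} [μ.IsAddLeftInvariant]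
    {τ : ℝ} (hτ : τ ≠ 0) {S : Set ℝ} (hS : (· + τ) ⁻¹' S =ᵐ[μ] S) (hfin : μ S ≠ ∞) :
    μ S = 0 := by
  have hτS : -τ +ᵥ S =ᵐ[μ] S := by
    rw [← preimage_vadd]
    simpa only [vadd_eq_add, add_comm τ] using hS
  have : Infinite (AddSubgroup.zmultiples |τ|) :=
    (infinite_zmultiples.mpr
      (not_isOfFinAddOrder_of_isAddTorsionFree (abs_ne_zero.mpr hτ))).to_subtype
  refine (isAddFundamentalDomain_Ioc (abs_pos.mpr hτ) 0 μ).measure_eq_zero_of_vadd_ae_eq_self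
    (fun g => (vadd_ae_eq_self_of_mem_zmultiples (G := ℝ) hτS ?_ : _)) hfin
  rw [AddSubgroup.zmultiples_neg, ← zmultiples_abs]
  exact g.2

section IndicatorDifference

variable {α : Type*} [MeasurableSpace α] {μ : Measure α} {A B E : Set α}

theorem ae_eq_of_ae_eq_restrict_of_subset (hA : A ⊆ E) (hB : B ⊆ E)
    (h : A =ᵐ[μ.restrict E] B) : A =ᵐ[μ] B := by
  rw [ae_eq_set] at h ⊢
  rwa [Measure.restrict_eq_self μ (sdiff_subset.trans hA),
    Measure.restrict_eq_self μ (sdiff_subset.trans hB)] at h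

theorem indicator_one_sub_indicator_one_ae_eq_zero_iff {R : Type*} [AddGroupWithOne R]
    [NeZero (1 : R)] :
    (fun x => A.indicator (1 : α → R) x - B.indicator 1 x) =ᵐ[μ] 0 ↔ A =ᵐ[μ] B := by
  rw [Filter.eventuallyEq_set]
  refine Filter.eventually_congr (.of_forall fun x => ?_)
  by_cases hA : x ∈ A <;> by_cases hB : x ∈ B <;> simp [hA, hB]

theorem setIntegral_indicator_one_sub_indicator_one_mul {𝕜 : Type*} [RCLike 𝕜] {f : α → 𝕜}
    (hA : MeasurableSet A) (hB : MeasurableSet B) (hAE : A ⊆ E) (hBE : B ⊆ E)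
    (hf : IntegrableOn f E μ) :
    ∫ x in E, (A.indicator 1 x - B.indicator 1 x) * f x ∂μ =
      ∫ x in A, f x ∂μ - ∫ x in B, f x ∂μ := by
  have hind : ∀ C : Set α, ∀ x, C.indicator 1 x * f x = C.indicator f x := fun C x => by
    by_cases hx : x ∈ C <;> simp [hx]
  simp_rw [sub_mul, hind]
  rw [integral_sub ((hf.mono_set hAE).integrable_indicator hA).integrableOn
      ((hf.mono_set hBE).integrable_indicator hB).integrableOn,
    setIntegral_indicator hA, setIntegral_indicator hB,
    inter_eq_right.mpr hAE, inter_eq_right.mpr hBE]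

end IndicatorDifference

theorem Function.Periodic.setIntegral_preimage_add {G F : Type*} [AddGroup G]
    [MeasurableSpace G] [MeasurableAdd G] [NormedAddCommGroup F] [NormedSpace ℝ F]
    {μ : Measure G} [μ.IsAddRightInvariant] {f : G → F} {c : G} (hf : Function.Periodic f c)
    (A : Set G) : ∫ x in (· + c) ⁻¹' A, f x ∂μ = ∫ x in A, f x ∂μ := by
  simpa only [hf _] using (measurePreserving_add_right μ c).setIntegral_preimage_emb
    (measurableEmbedding_addRight c) f A

theorem Complex.exp_I_int_mul_periodic (ℓ : ℤ) :
    Function.Periodic (fun s : ℝ => exp (I * ℓ * s)) (2 * Real.pi) := by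
  intro s
  dsimp only
  rw [show I * ℓ * ((s + 2 * Real.pi : ℝ) : ℂ) = I * ℓ * s + ℓ * (2 * Real.pi * I) by
      push_cast; ring,
    exp_add, exp_int_mul_two_pi_mul_I, mul_one]

/-- If E has positive-measure overlap with its translate E + 2πk (k ≠ 0), then
h = χ_{E₁} − χ_{E₂}, with E₁ = E ∩ (E + 2πk) and E₂ = E₁ − 2πk, is a nonzero element of
L²(E) orthogonal to every restricted exponential e^{iℓs}|_E; in particular the restricted
exponentials do not span a dense subspace of L²(E). -/
theorem indicator_difference_orthogonal_to_exponentials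
    (E : Set ℝ) (hE : MeasurableSet E) (hfin : volume E < ⊤) (k : ℤ) (hk : k ≠ 0)
    (hpos : 0 < volume (E ∩ ((fun x => x + 2 * Real.pi * k) '' E))) :
    let E₁ : Set ℝ := E ∩ ((fun x => x + 2 * Real.pi * k) '' E)
    let E₂ : Set ℝ := (fun x => x - 2 * Real.pi * k) '' E₁
    let h : ℝ → ℂ := fun x => Set.indicator E₁ 1 x - Set.indicator E₂ 1 x
    ¬ (h =ᵐ[volume.restrict E] 0) ∧
      ∀ ℓ : ℤ, ∫ s in E, h s * (starRingEnd ℂ) (Complex.exp (Complex.I * ℓ * s)) = 0 := by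
  intro E₁ E₂ h
  set t : ℝ := 2 * Real.pi * k
  have ht : t ≠ 0 := by positivity
  have hE₁ : MeasurableSet E₁ :=
    hE.inter (by rw [image_add_right]; exact measurable_add_const _ hE)
  have hE₂_eq : E₂ = (· + t) ⁻¹' E₁ := by simp only [E₂, sub_eq_add_neg, image_add_right']; rfl
  have hE₁E : E₁ ⊆ E := inter_subset_left
  have hE₂E : E₂ ⊆ E := calc
    E₂ ⊆ (· - t) '' ((· + t) '' E) := image_mono inter_subset_right
    _ = E := by rw [image_image]; simp
  refine ⟨fun h0 => ?_, fun ℓ => ?_⟩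
  · have hinv : (· + t) ⁻¹' E₁ =ᵐ[volume] E₁ := hE₂_eq ▸ (ae_eq_of_ae_eq_restrict_of_subset
      hE₁E hE₂E (indicator_one_sub_indicator_one_ae_eq_zero_iff.mp h0)).symm
    exact hpos.ne' (Real.measure_eq_zero_of_preimage_add_ae_eq_self ht hinv
      (measure_lt_top_of_subset hE₁E hfin.ne).ne)
  · set e : ℝ → ℂ := fun s => (starRingEnd ℂ) (Complex.exp (Complex.I * ℓ * s))
    have he_periodic : Function.Periodic e t := by
      rw [show t = k * (2 * Real.pi) by ring]
      exact ((Complex.exp_I_int_mul_periodic ℓ).int_mul k).comp _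
    have he_int : IntegrableOn e E :=
      (integrableOn_const (C := (1 : ℝ)) hfin.ne).mono' (by fun_prop)
        (.of_forall fun s => by simp [e, Complex.norm_exp])
    rw [setIntegral_indicator_one_sub_indicator_one_mul hE₁
        (hE₂_eq ▸ measurable_add_const t hE₁) hE₁E hE₂E he_int,
      hE₂_eq, he_periodic.setIntegral_preimage_add, sub_self]
end

section
/- Let 𝒟 be the group of dilations by powers of an expansive matrix A on ℝ^n and 𝒯 the group of translations by vectors 2πk, k ∈ ℤ^n. Then (𝒟, 𝒯) is an abstract dilation–translation pair: (1) for each bounded set E and each open set F bounded away from 0 there exist ℓ ∈ ℕ and k ∈ ℤ^n such that E + 2πk ⊆ A^ℓ F; (2) 0 is a fixed point of 𝒟 such that for every neighborhood N of 0 and every bounded set E there is ℓ with A^{-ℓ} E ⊆ N. -/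
/-!
For an expansive `A`, every complex eigenvalue of `A⁻¹` has modulus `< 1`, so by
Gelfand's formula `A⁻ˡ → 0`, and `A⁻ˡ` eventually maps any bounded set into any
neighbourhood of `0`; this is (2). For (1), take a ball `B(y, r) ⊆ F`. The translates of the
cube `Q = [-π, π]ⁿ` by `2πℤⁿ` cover `ℝⁿ`, so `2πk - Aˡ y ∈ Q` for a suitable `k`, and then
`A⁻ˡ (E + 2πk) ⊆ y + A⁻ˡ (E + Q)`. Since `E + Q` does not depend on `ℓ`, we may first
choose `ℓ` with `A⁻ˡ (E + Q) ⊆ B(0, r)` and only afterwards `k`.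
-/

open Filter Topology Real

theorem tendsto_pow_atTop_nhds_zero_of_spectralRadius_lt_one {A : Type*} [NormedRing A]
    [NormedAlgebra ℂ A] [CompleteSpace A] {a : A} (ha : spectralRadius ℂ a < 1) :
    Tendsto (fun n : ℕ => a ^ n) atTop (𝓝 0) := by
  obtain ⟨r, hρr, hr1⟩ := ENNReal.lt_iff_exists_nnreal_btwn.1 ha
  have hr1 : r < 1 := by exact_mod_cast hr1
  have hle : ∀ᶠ n : ℕ in atTop, ‖a ^ n‖ ≤ r ^ n := by
    have gelfand := spectrum.pow_nnnorm_pow_one_div_tendsto_nhds_spectralRadius a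
    filter_upwards [gelfand.eventually_lt_const hρr, eventually_gt_atTop 0] with n hn hn0
    rw [one_div, ENNReal.rpow_inv_lt_iff (by positivity), ENNReal.rpow_natCast] at hn
    exact_mod_cast hn.le
  exact squeeze_zero_norm' hle (tendsto_pow_atTop_nhds_zero_of_lt_one r.2 hr1)

theorem ContinuousLinearMap.eventually_image_subset_of_tendsto_zero {𝕜 E F ι : Type*}
    [NontriviallyNormedField 𝕜] [NormedAddCommGroup E] [NormedSpace 𝕜 E]
    [NormedAddCommGroup F] [NormedSpace 𝕜 F] {l : Filter ι} {T : ι → E →L[𝕜] F}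
    (hT : Tendsto T l (𝓝 0)) {s : Set E} (hs : Bornology.IsBounded s) {N : Set F}
    (hN : N ∈ 𝓝 0) : ∀ᶠ i in l, T i '' s ⊆ N := by
  have := (ContinuousLinearMap.hasBasis_nhds_zero (σ := RingHom.id 𝕜) (E := E)).mem_of_mem
    (i := (s, N)) ⟨(NormedSpace.isVonNBounded_iff 𝕜).2 hs, hN⟩
  filter_upwards [hT this] with i hi
  exact Set.image_subset_iff.2 hi

theorem exists_int_abs_two_pi_mul_sub_le (x : ℝ) : ∃ k : ℤ, |2 * π * k - x| ≤ π := by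
  refine ⟨round (x / (2 * π)), ?_⟩
  have h2π : 0 < 2 * π := by positivity
  calc |2 * π * round (x / (2 * π)) - x|
      = 2 * π * |x / (2 * π) - round (x / (2 * π))| := by
        rw [← abs_sub_comm, ← abs_of_pos h2π, ← abs_mul, abs_of_pos h2π]
        congr 1; field_simp
    _ ≤ 2 * π * (1 / 2) := by gcongr; exact abs_sub_round _
    _ = π := by ring

theorem exists_int_two_pi_mul_sub_mem {ι : Type*} [Fintype ι] (c : EuclideanSpace ℝ ι) :
    ∃ k : ι → ℤ, WithLp.toLp 2 (fun i => 2 * π * k i) - c ∈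
      WithLp.toLp 2 '' Metric.closedBall 0 π := by
  choose k hk using fun i => exists_int_abs_two_pi_mul_sub_le (c i)
  refine ⟨k, fun i => 2 * π * k i - c i, ?_, by ext; simp⟩
  rw [mem_closedBall_zero_iff, pi_norm_le_iff_of_nonneg Real.pi_pos.le]
  exact hk

namespace Matrix

variable {ι : Type*} [Fintype ι] [DecidableEq ι]

def IsExpansive (A : Matrix ι ι ℝ) : Prop :=
  ∀ μ : ℂ, (A.map Complex.ofReal).charpoly.IsRoot μ → 1 < ‖μ‖

variable {A : Matrix ι ι ℝ}

theorem IsExpansive.isUnit (hA : A.IsExpansive) : IsUnit A := by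
  by_contra h
  have h0 : (0 : ℂ) ∈ spectrum ℂ (A.map Complex.ofReal) := by
    rw [spectrum.zero_mem_iff, isUnit_iff_isUnit_det]
    change ¬IsUnit (Complex.ofRealHom.mapMatrix A).det
    rwa [← RingHom.map_det, isUnit_map_iff, ← isUnit_iff_isUnit_det]
  exact (hA 0 (mem_spectrum_iff_isRoot_charpoly.1 h0)).not_ge (by simp)

theorem IsExpansive.norm_lt_one_of_mem_spectrum_inv (hA : A.IsExpansive) {z : ℂ}
    (hz : z ∈ spectrum ℂ (A⁻¹.map Complex.ofReal)) : ‖z‖ < 1 := by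
  let u : (Matrix ι ι ℂ)ˣ := Units.map Complex.ofRealHom.mapMatrix.toMonoidHom hA.isUnit.unit
  have hu : (↑u⁻¹ : Matrix ι ι ℂ) = A⁻¹.map Complex.ofReal := by
    rw [Units.coe_map_inv, coe_units_inv, IsUnit.unit_spec]
    rfl
  rw [← hu, ← spectrum.inv₀_mem_iff] at hz
  have := hA z⁻¹ (mem_spectrum_iff_isRoot_charpoly.1 hz)
  rw [norm_inv] at this
  by_contra! h
  exact (inv_le_one_of_one_le₀ h).not_gt this

open scoped Matrix.Norms.L2Operator in
theorem IsExpansive.tendsto_inv_pow_atTop_nhds_zero (hA : A.IsExpansive) :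
    Tendsto (fun ℓ : ℕ => A⁻¹ ^ ℓ) atTop (𝓝 0) := by
  have hpow : Tendsto (fun ℓ : ℕ => A⁻¹.map Complex.ofReal ^ ℓ) atTop (𝓝 0) := by
    rcases isEmpty_or_nonempty ι with hι | hι
    · exact tendsto_const_nhds.congr fun _ => Subsingleton.elim _ _
    · exact tendsto_pow_atTop_nhds_zero_of_spectralRadius_lt_one <| by
        exact_mod_cast spectrum.spectralRadius_lt_of_forall_lt _ (r := 1) fun z hz => by
          exact_mod_cast hA.norm_lt_one_of_mem_spectrum_inv hz
  have hre : Continuous fun M : Matrix ι ι ℂ => M.map Complex.re :=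
    continuous_id.matrix_map Complex.continuous_re
  convert (hre.tendsto 0).comp hpow using 2 with ℓ
  · change _ = (Complex.ofRealHom.mapMatrix A⁻¹ ^ ℓ).map Complex.re
    rw [← map_pow]
    ext
    simp
  · simp

theorem IsExpansive.eventually_inv_pow_image_subset (hA : A.IsExpansive)
    {E : Set (EuclideanSpace ℝ ι)} (hE : Bornology.IsBounded E) {N : Set (EuclideanSpace ℝ ι)}
    (hN : N ∈ 𝓝 0) : ∀ᶠ ℓ : ℕ in atTop, toEuclideanLin (A⁻¹ ^ ℓ) '' E ⊆ N := by
  have hcont : Continuous (toEuclideanCLM (𝕜 := ℝ) (n := ι)) :=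
    (toEuclideanCLM (𝕜 := ℝ) (n := ι)).toAlgEquiv.toLinearMap.continuous_of_finiteDimensional
  refine ContinuousLinearMap.eventually_image_subset_of_tendsto_zero
    (T := fun ℓ : ℕ => toEuclideanCLM (𝕜 := ℝ) (A⁻¹ ^ ℓ)) ?_ hE hN
  have := (hcont.tendsto 0).comp hA.tendsto_inv_pow_atTop_nhds_zero
  rwa [map_zero] at this

theorem toEuclideanLin_pow_inv_pow_apply (hA : IsUnit A) (ℓ : ℕ) (v : EuclideanSpace ℝ ι) :
    toEuclideanLin (A ^ ℓ) (toEuclideanLin (A⁻¹ ^ ℓ) v) = v := by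
  change (toEuclideanCLM (𝕜 := ℝ) (A ^ ℓ) * toEuclideanCLM (𝕜 := ℝ) (A⁻¹ ^ ℓ)) v = v
  rw [← map_mul, inv_pow', mul_nonsing_inv _ ((isUnit_iff_isUnit_det _).1 (hA.pow ℓ)), map_one]
  rfl

theorem IsExpansive.exists_translate_subset_pow_image (hA : A.IsExpansive)
    {E F : Set (EuclideanSpace ℝ ι)} (hE : Bornology.IsBounded E) (hF : IsOpen F)
    (hFne : F.Nonempty) : ∃ (ℓ : ℕ) (k : ι → ℤ),
      (fun x => x + WithLp.toLp 2 (fun i => 2 * π * k i)) '' E ⊆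
        toEuclideanLin (A ^ ℓ) '' F := by
  obtain ⟨y, hy⟩ := hFne
  obtain ⟨r, hr, hball⟩ := Metric.isOpen_iff.1 hF y hy
  have hK : Bornology.IsBounded (WithLp.toLp 2 '' Metric.closedBall (0 : ι → ℝ) π) :=
    ((isCompact_closedBall _ _).image (PiLp.continuous_toLp 2 _)).isBounded
  obtain ⟨ℓ, hℓ⟩ :=
    (hA.eventually_inv_pow_image_subset (hE.add hK) (Metric.ball_mem_nhds 0 hr)).exists
  obtain ⟨k, hk⟩ := exists_int_two_pi_mul_sub_mem (toEuclideanLin (A ^ ℓ) y)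
  refine ⟨ℓ, k, ?_⟩
  rintro _ ⟨x, hx, rfl⟩
  set t := WithLp.toLp 2 (fun i => 2 * π * k i)
  set c := toEuclideanLin (A ^ ℓ) y
  refine ⟨y + toEuclideanLin (A⁻¹ ^ ℓ) (x + (t - c)), hball ?_, ?_⟩
  · simpa [dist_eq_norm] using hℓ ⟨_, Set.add_mem_add hx hk, rfl⟩
  · rw [map_add, toEuclideanLin_pow_inv_pow_apply hA.isUnit]
    dsimp only
    abel

end Matrix

theorem dilation_translation_pair_general
    {n : ℕ} (A : Matrix (Fin n) (Fin n) ℝ)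
    (heig : ∀ μ : ℂ, (Matrix.charpoly (A.map Complex.ofReal)).IsRoot μ → 1 < ‖μ‖) :
    (∀ E F : Set (EuclideanSpace ℝ (Fin n)), Bornology.IsBounded E → IsOpen F →
      F.Nonempty → (∃ ε > (0 : ℝ), ∀ x ∈ F, ε ≤ ‖x‖) →
      ∃ (ℓ : ℕ) (k : Fin n → ℤ),
        (fun x : EuclideanSpace ℝ (Fin n) =>
          x + (WithLp.equiv 2 (Fin n → ℝ)).symm (fun i => 2 * Real.pi * (k i))) '' E ⊆
          Matrix.toEuclideanLin (A ^ ℓ) '' F) ∧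
    ((∀ ℓ : ℕ, Matrix.toEuclideanLin (A ^ ℓ) (0 : EuclideanSpace ℝ (Fin n)) = 0) ∧
      ∀ N ∈ 𝓝 (0 : EuclideanSpace ℝ (Fin n)), ∀ E : Set (EuclideanSpace ℝ (Fin n)),
        Bornology.IsBounded E → ∃ ℓ : ℕ, Matrix.toEuclideanLin (A⁻¹ ^ ℓ) '' E ⊆ N) := by
  have hA : A.IsExpansive := heig
  exact ⟨fun E F hE hF hFne _ => hA.exists_translate_subset_pow_image hE hF hFne,
    fun ℓ => map_zero _, fun N hN E hE => (hA.eventually_inv_pow_image_subset hE hN).exists⟩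

/-- The dilations by powers of an expansive matrix A together with the translations by
2πℤⁿ form an abstract dilation–translation pair: (1) for every bounded set E and every
nonempty open set F bounded away from 0 there are ℓ ∈ ℕ and k ∈ ℤⁿ with E + 2πk ⊆ A^ℓ F;
(2) 0 is a fixed point for the dilations, and for every neighborhood N of 0 and bounded E
there is ℓ with A^{-ℓ} E ⊆ N. -/
theorem dilation_translation_pair
    {n : ℕ} (A : Matrix (Fin n) (Fin n) ℝ) (hA : IsUnit A)
    (heig : ∀ μ : ℂ, (Matrix.charpoly (A.map Complex.ofReal)).IsRoot μ → 1 < ‖μ‖) :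
    (∀ E F : Set (EuclideanSpace ℝ (Fin n)), Bornology.IsBounded E → IsOpen F →
      F.Nonempty → (∃ ε > (0 : ℝ), ∀ x ∈ F, ε ≤ ‖x‖) →
      ∃ (ℓ : ℕ) (k : Fin n → ℤ),
        (fun x : EuclideanSpace ℝ (Fin n) =>
          x + (WithLp.equiv 2 (Fin n → ℝ)).symm (fun i => 2 * Real.pi * (k i))) '' E ⊆
          Matrix.toEuclideanLin (A ^ ℓ) '' F) ∧
    ((∀ ℓ : ℕ, Matrix.toEuclideanLin (A ^ ℓ) (0 : EuclideanSpace ℝ (Fin n)) = 0) ∧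
      ∀ N ∈ 𝓝 (0 : EuclideanSpace ℝ (Fin n)), ∀ E : Set (EuclideanSpace ℝ (Fin n)),
        Bornology.IsBounded E → ∃ ℓ : ℕ, Matrix.toEuclideanLin (A⁻¹ ^ ℓ) '' E ⊆ N) :=
  dilation_translation_pair_general A heig
end
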